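/- arXiv:1409.4991 — 2 statements merged into one kernel-verified Lean document; each statement's English description precedes it below -/
import Mathlib

section
/- If an adversary crashes fewer than (γ/2)·2^D servers in a k-ary butterfly of dimension D (with n = k^D servers, k ≥ 2), then for every level ℓ with 1 ≤ ℓ ≤ D, the number of sub-butterflies at level ℓ (each containing k^ℓ servers) that contain at least 2^(ℓ-1) crashed servers is less than γ·2^(D-ℓ), and hence the fraction of such blocked sub-butterflies among all k^(D-ℓ) sub-butterflies at level ℓ is at most γ. -/
/-!
Every blocked sub-butterfly at level `ℓ` contains at least `2^(ℓ-1)` crashed servers and the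
sub-butterflies are disjoint, so (a counting form of Markov's inequality) there are at most
`#crashed / 2^(ℓ-1) < γ · 2^(D-ℓ)` of them. Since `2 ≤ k`, this is at most `γ · k^(D-ℓ)`.
-/

open Finset

theorem Finset.card_filter_le_card_fiber_mul_le {α β : Type*} [Fintype β] [DecidableEq β]
    (f : α → β) (s : Finset α) (t : ℕ) :
    #{b | t ≤ #{a ∈ s | f a = b}} * t ≤ #s :=
  calc #{b | t ≤ #{a ∈ s | f a = b}} * t
      ≤ ∑ b ∈ {b | t ≤ #{a ∈ s | f a = b}}, #{a ∈ s | f a = b} := by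
        rw [← smul_eq_mul]
        exact card_nsmul_le_sum _ _ t fun b hb => (mem_filter.mp hb).2
    _ ≤ ∑ b, #{a ∈ s | f a = b} := sum_le_sum_of_subset (subset_univ _)
    _ = #s := (card_eq_sum_card_fiberwise fun a _ => mem_univ (f a)).symm

theorem lt_mul_two_pow_sub_of_mul_two_pow_pred_lt {b γ : ℝ} {D ℓ : ℕ} (hℓ1 : 1 ≤ ℓ)
    (hℓD : ℓ ≤ D) (h : b * 2 ^ (ℓ - 1) < γ / 2 * 2 ^ D) : b < γ * 2 ^ (D - ℓ) := by
  have hD : (2 : ℝ) ^ D = 2 ^ (ℓ - 1) * 2 ^ (D - ℓ) * 2 := by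
    rw [← pow_add, ← pow_succ]
    congr 1
    omega
  refine lt_of_mul_lt_mul_right (a := (2 : ℝ) ^ (ℓ - 1)) ?_ (by positivity)
  calc b * 2 ^ (ℓ - 1) < γ / 2 * 2 ^ D := h
    _ = γ * 2 ^ (D - ℓ) * 2 ^ (ℓ - 1) := by rw [hD]; ring

theorem stmt0_general {k D ℓ : ℕ} (γ : ℝ) (hγ : 0 < γ) (hk : 2 ≤ k) (hℓ1 : 1 ≤ ℓ) (hℓD : ℓ ≤ D)
    (group : Fin (k ^ D) → Fin (k ^ (D - ℓ)))
    (crashed : Finset (Fin (k ^ D)))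
    (hcr : (crashed.card : ℝ) < γ / 2 * 2 ^ D)
    (blocked : Finset (Fin (k ^ (D - ℓ))))
    (hblocked : blocked =
      Finset.univ.filter fun g => 2 ^ (ℓ - 1) ≤ (crashed.filter fun s => group s = g).card) :
    (blocked.card : ℝ) < γ * 2 ^ (D - ℓ)
    ∧ (blocked.card : ℝ) / (k : ℝ) ^ (D - ℓ) ≤ γ := by
  have hcount : (#blocked : ℝ) * 2 ^ (ℓ - 1) ≤ #crashed := by
    subst hblocked
    exact_mod_cast card_filter_le_card_fiber_mul_le group crashed (2 ^ (ℓ - 1))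
  have hlt : (#blocked : ℝ) < γ * 2 ^ (D - ℓ) :=
    lt_mul_two_pow_sub_of_mul_two_pow_pred_lt hℓ1 hℓD (hcount.trans_lt hcr)
  refine ⟨hlt, (div_le_iff₀ (by positivity)).mpr (hlt.le.trans ?_)⟩
  gcongr
  exact_mod_cast hk

/-- If an adversary crashes fewer than `(γ/2)·2^D` servers in a `k`-ary butterfly of
dimension `D` (servers partitioned at level `ℓ` into `k^(D-ℓ)` sub-butterflies of `k^ℓ`
servers each), then for every `1 ≤ ℓ ≤ D` the number of blocked sub-butterflies (those
with at least `2^(ℓ-1)` crashed servers) is less than `γ·2^(D-ℓ)`, hence the fraction of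
blocked sub-butterflies is at most `γ`. -/
theorem stmt0 {k D ℓ : ℕ} (γ : ℝ) (hγ : 0 < γ) (hk : 2 ≤ k) (hℓ1 : 1 ≤ ℓ) (hℓD : ℓ ≤ D)
    (group : Fin (k ^ D) → Fin (k ^ (D - ℓ)))
    (hfiber : ∀ g, (Finset.univ.filter fun s => group s = g).card = k ^ ℓ)
    (crashed : Finset (Fin (k ^ D)))
    (hcr : (crashed.card : ℝ) < γ / 2 * 2 ^ D)
    (blocked : Finset (Fin (k ^ (D - ℓ))))
    (hblocked : blocked =
      Finset.univ.filter fun g => 2 ^ (ℓ - 1) ≤ (crashed.filter fun s => group s = g).card) :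
    (blocked.card : ℝ) < γ * 2 ^ (D - ℓ)
    ∧ (blocked.card : ℝ) / (k : ℝ) ^ (D - ℓ) ≤ γ :=
  stmt0_general γ hγ hk hℓ1 hℓD group crashed hcr blocked hblocked
end

section
/- Bottom-up aggregation in a k-ary butterfly of dimension D computes global sums correctly: if each of the n = k^D level-D nodes holds a pair (n₀, n₁) of natural numbers and in each of D rounds every node at level ℓ sums the pairs received from its k neighbors at level ℓ+1, then after D rounds every level-0 node holds the pair (∑ n₀, ∑ n₁) summed over all n initial nodes, and in each round each node sends and receives at most 2k messages. -/
open Finset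

namespace Butterfly

variable {α : Type*} [Fintype α] [DecidableEq α] {D : ℕ}

/-- The leaves of the lower tree `LT(ℓ, x)`: the level-`D` nodes reachable from `(ℓ, x)` by
rewriting only the coordinates `ℓ, …, D - 1`. -/
def lowerTree (ℓ : ℕ) (x : Fin D → α) : Finset (Fin D → α) :=
  univ.filter fun y => ∀ i : Fin D, (i : ℕ) < ℓ → y i = x i

theorem mem_lowerTree {ℓ : ℕ} {x y : Fin D → α} :
    y ∈ lowerTree ℓ x ↔ ∀ i : Fin D, (i : ℕ) < ℓ → y i = x i := by
  simp [lowerTree]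

theorem lowerTree_zero (x : Fin D → α) : lowerTree 0 x = univ := by
  ext y
  simp [mem_lowerTree]

theorem lowerTree_of_le {ℓ : ℕ} (h : D ≤ ℓ) (x : Fin D → α) : lowerTree ℓ x = {x} := by
  ext y
  simp only [mem_lowerTree, mem_singleton, funext_iff]
  exact ⟨fun hy i => hy i (by omega), fun hy i _ => hy i⟩

theorem lowerTree_succ_update (i : Fin D) (x : Fin D → α) (b : α) :
    lowerTree (i + 1) (Function.update x i b) = (lowerTree i x).filter (· i = b) := by
  ext y
  simp only [mem_filter, mem_lowerTree]
  constructor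
  · intro hy
    refine ⟨fun j hj => ?_, by simpa using hy i (by omega)⟩
    rw [hy j (by omega), Function.update_of_ne (Fin.ne_of_lt hj)]
  · rintro ⟨hy, rfl⟩ j hj
    rcases (Nat.lt_succ_iff.mp hj).lt_or_eq with hj | hj
    · rw [Function.update_of_ne (Fin.ne_of_lt hj), hy j hj]
    · rw [Fin.ext hj, Function.update_self]

theorem sum_lowerTree_eq_sum_sum_update {M : Type*} [AddCommMonoid M] (g : (Fin D → α) → M)
    (i : Fin D) (x : Fin D → α) :
    ∑ y ∈ lowerTree i x, g y = ∑ b, ∑ y ∈ lowerTree (i + 1) (Function.update x i b), g y := by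
  simp_rw [lowerTree_succ_update]
  exact (sum_fiberwise _ _ _).symm

theorem eq_sum_lowerTree {M : Type*} [AddCommMonoid M] (f : (Fin D → α) → M)
    (val : ℕ → (Fin D → α) → M) (hleaf : ∀ x, val D x = f x)
    (hstep : ∀ (ℓ : Fin D) (x : Fin D → α),
      val ℓ x = ∑ b, val ((ℓ : ℕ) + 1) (Function.update x ℓ b))
    {ℓ : ℕ} (hℓ : ℓ ≤ D) (x : Fin D → α) : val ℓ x = ∑ y ∈ lowerTree ℓ x, f y := by
  induction hℓ using Nat.decreasingInduction generalizing x with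
  | self => rw [hleaf, lowerTree_of_le le_rfl, sum_singleton]
  | of_succ ℓ hℓ ih =>
    rw [hstep ⟨ℓ, hℓ⟩, sum_lowerTree_eq_sum_sum_update f ⟨ℓ, hℓ⟩]
    exact sum_congr rfl fun b _ => ih _

end Butterfly

theorem stmt17_general (k D : ℕ)
    (f : (Fin D → Fin k) → ℕ × ℕ)
    (val : ℕ → (Fin D → Fin k) → ℕ × ℕ)
    (hleaf : ∀ x, val D x = f x)
    (hstep : ∀ (ℓ : Fin D) (x : Fin D → Fin k),
      val ℓ x = ∑ b : Fin k, val ((ℓ : ℕ) + 1) (Function.update x ℓ b)) :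
    (∀ x : Fin D → Fin k, val 0 x = ∑ y : Fin D → Fin k, f y) ∧ k + k ≤ 2 * k := by
  refine ⟨fun x => ?_, by omega⟩
  rw [Butterfly.eq_sum_lowerTree f val hleaf hstep D.zero_le, Butterfly.lowerTree_zero]

/-- Bottom-up aggregation in a `k`-ary butterfly of dimension `D` computes global sums
correctly: if each level-`D` node `x` holds a pair `f x` of naturals and every node at
level `ℓ < D` holds the sum of the pairs of its `k` neighbours at level `ℓ+1` (obtained
by replacing coordinate `ℓ`), then every level-0 node holds the total sum over all
`n = k^D` leaves; moreover each node sends and receives at most `2k` messages per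
round (`k` sent plus `k` received). -/
theorem stmt17 (k D : ℕ) (hk : 2 ≤ k) [NeZero k]
    (f : (Fin D → Fin k) → ℕ × ℕ)
    (val : ℕ → (Fin D → Fin k) → ℕ × ℕ)
    (hleaf : ∀ x, val D x = f x)
    (hstep : ∀ (ℓ : Fin D) (x : Fin D → Fin k),
      val ℓ x = ∑ b : Fin k, val ((ℓ : ℕ) + 1) (Function.update x ℓ b)) :
    (∀ x : Fin D → Fin k, val 0 x = ∑ y : Fin D → Fin k, f y) ∧ k + k ≤ 2 * k :=
  stmt17_general k D f val hleaf hstep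
end
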